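/- arXiv:2309.07204 — 4 statements merged into one kernel-verified Lean document; each statement's English description precedes it below -/
import Mathlib

section
/- Every lattice (discrete subgroup of full rank m) in ℝ^n admits a Minkowski basis, i.e., a basis (b₁, …, b_m) such that for every i and every integer vector (a₁, …, a_m) with gcd(a_i, …, a_m) = 1, one has ‖b_i‖ ≤ ‖∑_j a_j b_j‖. -/
open Finset Matrix

section MatrixLemmas

variable {m : ℕ}

/-- A matrix equal to the identity except that row `i` is `a`. -/
def uPiv (i : Fin m) (a : Fin m → ℤ) : Matrix (Fin m) (Fin m) ℤ :=
  Matrix.of fun j jj => if j = i then a jj else if j = jj then 1 else 0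

lemma uPiv_row_self (i : Fin m) (a : Fin m → ℤ) (jj : Fin m) : uPiv i a i jj = a jj := by
  simp [uPiv]

lemma uPiv_row_ne (i : Fin m) (a : Fin m → ℤ) {j : Fin m} (h : j ≠ i) (jj : Fin m) :
    uPiv i a j jj = if j = jj then 1 else 0 := by
  simp [uPiv, h]

/-- If a row of `M` is a standard basis row, the corresponding row of `M * N` is that row of
`N`. -/
lemma row_delta_mul {M N : Matrix (Fin m) (Fin m) ℤ} {j : Fin m}
    (hM : ∀ jj, M j jj = if j = jj then 1 else 0) (jj : Fin m) :
    (M * N) j jj = N j jj := by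
  rw [Matrix.mul_apply]
  rw [Finset.sum_congr rfl (fun x _ => by rw [hM x])]
  simp [ite_mul]

lemma uPiv_mul_inv (i : Fin m) (a : Fin m → ℤ) (ha : a i * a i = 1) :
    uPiv i a * uPiv i (fun jj => if jj = i then a i else -(a i * a jj)) = 1 := by
  ext j jj
  by_cases hj : j = i
  · subst hj
    rw [Matrix.mul_apply, ← Finset.sum_erase_add _ _ (Finset.mem_univ j)]
    rw [Finset.sum_congr rfl (fun x hx => by
      rw [uPiv_row_self, uPiv_row_ne _ _ (Finset.mem_erase.mp hx).1, mul_ite, mul_one, mul_zero])]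
    rw [Finset.sum_ite_eq', uPiv_row_self, uPiv_row_self]
    by_cases hjj : jj = j
    · subst hjj; simp [Matrix.one_apply, ha]
    · simp only [Finset.mem_erase, hjj, Matrix.one_apply, Ne.symm hjj,
        Finset.mem_univ, and_true, ne_eq, not_false_iff, if_true, if_false,
        if_neg (Ne.symm hjj), if_neg hjj]
      linear_combination (-(a jj)) * ha
  · rw [row_delta_mul (uPiv_row_ne i a hj), uPiv_row_ne i _ hj, Matrix.one_apply]
end MatrixLemmas


section Two
variable {m : ℕ}

/-- A matrix equal to the identity except for a 2×2 block in rows/columns `i, i'`. -/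
def twoAt (i i' : Fin m) (x y z w : ℤ) : Matrix (Fin m) (Fin m) ℤ :=
  Matrix.of fun j jj =>
    if j = i then (if jj = i then x else if jj = i' then y else 0)
    else if j = i' then (if jj = i then z else if jj = i' then w else 0)
    else if j = jj then 1 else 0

lemma twoAt_row_ne (i i' : Fin m) (x y z w : ℤ) {j : Fin m} (h1 : j ≠ i) (h2 : j ≠ i')
    (jj : Fin m) : twoAt i i' x y z w j jj = if j = jj then 1 else 0 := by
  simp [twoAt, h1, h2]

lemma sum_split2 {i i' : Fin m} (h : i ≠ i') (f : Fin m → ℤ)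
    (h0 : ∀ x, x ≠ i → x ≠ i' → f x = 0) : ∑ x, f x = f i + f i' := by
  rw [← Finset.sum_pair h]
  refine (Finset.sum_subset (Finset.subset_univ _) fun x _ hx => ?_).symm
  simp only [Finset.mem_insert, Finset.mem_singleton, not_or] at hx
  exact h0 x hx.1 hx.2

lemma twoAt_mul_row_i (i i' : Fin m) (h : i ≠ i') (x y z w : ℤ)
    (N : Matrix (Fin m) (Fin m) ℤ) (jj : Fin m) :
    (twoAt i i' x y z w * N) i jj = x * N i jj + y * N i' jj := by
  rw [Matrix.mul_apply, sum_split2 h _ (fun u hu1 hu2 => by simp [twoAt, Ne.symm hu1, Ne.symm hu2, hu1, hu2])]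
  simp [twoAt, h, Ne.symm h]

lemma twoAt_mul_row_i' (i i' : Fin m) (h : i ≠ i') (x y z w : ℤ)
    (N : Matrix (Fin m) (Fin m) ℤ) (jj : Fin m) :
    (twoAt i i' x y z w * N) i' jj = z * N i jj + w * N i' jj := by
  rw [Matrix.mul_apply, sum_split2 h _ (fun u hu1 hu2 => by simp [twoAt, Ne.symm hu1, Ne.symm hu2, hu1, hu2])]
  simp [twoAt, h, Ne.symm h]

lemma twoAt_mul_twoAt (i i' : Fin m) (h : i ≠ i') (x y z w x' y' z' w' : ℤ) :
    twoAt i i' x y z w * twoAt i i' x' y' z' w' =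
      twoAt i i' (x*x' + y*z') (x*y' + y*w') (z*x' + w*z') (z*y' + w*w') := by
  ext j jj
  by_cases hj : j = i
  · rw [hj]
    rw [twoAt_mul_row_i i i' h]
    simp only [twoAt, Matrix.of_apply, if_pos rfl]
    simp [Ne.symm h]
    split_ifs <;> ring
  · by_cases hj' : j = i'
    · rw [hj']
      rw [twoAt_mul_row_i' i i' h]
      simp only [twoAt, Matrix.of_apply, if_neg (Ne.symm h ∘ Eq.symm), if_pos rfl]
      simp [h, Ne.symm h]
      split_ifs <;> ring
    · rw [row_delta_mul (twoAt_row_ne i i' x y z w hj hj')]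
      rw [twoAt_row_ne i i' x' y' z' w' hj hj', twoAt_row_ne i i' _ _ _ _ hj hj']

lemma twoAt_id (i i' : Fin m) (h : i ≠ i') : twoAt i i' 1 0 0 1 = 1 := by
  ext j jj
  simp only [twoAt, Matrix.of_apply, Matrix.one_apply]
  split_ifs <;> simp_all

end Two

section Key
variable {m : ℕ}

lemma unitCase (i : Fin m) (a : Fin m → ℤ) (ha : a i * a i = 1) :
    ∃ A B : Matrix (Fin m) (Fin m) ℤ, A * B = 1 ∧
      (∀ j, j ≠ i → ∀ jj, A j jj = if j = jj then 1 else 0) ∧ ∀ jj, A i jj = a jj :=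
  ⟨uPiv i a, _, uPiv_mul_inv i a ha, fun _ hj => uPiv_row_ne i a hj, uPiv_row_self i a⟩

lemma keyMatrix (r : ℕ) : ∀ {m : ℕ} (i : ℕ) (him : i < m) (a : Fin m → ℤ),
    i + r + 1 = m →
    ((Finset.univ.filter fun j : Fin m => i ≤ (j : ℕ)).gcd a = 1) →
    ∃ A B : Matrix (Fin m) (Fin m) ℤ, A * B = 1 ∧
      (∀ j : Fin m, (j : ℕ) < i → ∀ jj, A j jj = if j = jj then 1 else 0) ∧
      (∀ jj, A ⟨i, him⟩ jj = a jj) := by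
  induction r with
  | zero =>
    intro m i him a hm hgcd
    have hsplit : (Finset.univ.filter fun j : Fin m => i ≤ (j : ℕ)) =
        insert ⟨i, him⟩ (Finset.univ.filter fun j : Fin m => i + 1 ≤ (j : ℕ)) := by
      ext x
      simp [Fin.ext_iff]
      omega
    have hempty : (Finset.univ.filter fun j : Fin m => i + 1 ≤ (j : ℕ)) = ∅ := by
      apply Finset.filter_eq_empty_iff.mpr
      intro x _
      have := x.isLt
      omega
    rw [hsplit, hempty, Finset.gcd_insert, Finset.gcd_empty, gcd_zero_right] at hgcd
    have habs : |a ⟨i, him⟩| = 1 := by rw [Int.abs_eq_normalize, hgcd]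
    have ha : a ⟨i, him⟩ * a ⟨i, him⟩ = 1 := by
      rcases (abs_eq (by norm_num : (0:ℤ) ≤ 1)).mp habs with h | h <;> rw [h] <;> ring
    obtain ⟨A, B, hAB, hrows, hrow⟩ := unitCase ⟨i, him⟩ a ha
    exact ⟨A, B, hAB, fun j hj => hrows j (by simp [Fin.ext_iff]; omega), hrow⟩
  | succ r ih =>
    intro m i him a hm hgcd
    have hsplit : (Finset.univ.filter fun j : Fin m => i ≤ (j : ℕ)) =
        insert ⟨i, him⟩ (Finset.univ.filter fun j : Fin m => i + 1 ≤ (j : ℕ)) := by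
      ext x
      simp [Fin.ext_iff]
      omega
    set g := (Finset.univ.filter fun j : Fin m => i + 1 ≤ (j : ℕ)).gcd a with hg
    rw [hsplit, Finset.gcd_insert] at hgcd
    rw [← hg] at hgcd
    by_cases hg0 : g = 0
    · rw [hg0, gcd_zero_right] at hgcd
      have habs : |a ⟨i, him⟩| = 1 := by rw [Int.abs_eq_normalize, hgcd]
      have ha : a ⟨i, him⟩ * a ⟨i, him⟩ = 1 := by
        rcases (abs_eq (by norm_num : (0:ℤ) ≤ 1)).mp habs with h | h <;> rw [h] <;> ring
      obtain ⟨A, B, hAB, hrows, hrow⟩ := unitCase ⟨i, him⟩ a ha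
      exact ⟨A, B, hAB, fun j hj => hrows j (by simp [Fin.ext_iff]; omega), hrow⟩
    · -- main recursive case
      have hi1 : i + 1 < m := by omega
      have hdvd : ∀ j : Fin m, i + 1 ≤ (j : ℕ) → g ∣ a j := fun j hj =>
        Finset.gcd_dvd (Finset.mem_filter.mpr ⟨Finset.mem_univ _, hj⟩)
      set abar : Fin m → ℤ := fun j => if i + 1 ≤ (j : ℕ) then a j / g else 0 with habar
      have hgA : (Finset.univ.filter fun j : Fin m => i + 1 ≤ (j : ℕ)).gcd abar = 1 := by
        have h1 : g = (Finset.univ.filter fun j : Fin m => i + 1 ≤ (j : ℕ)).gcd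
            (fun j => g * abar j) := by
          refine Finset.gcd_congr rfl fun x hx => ?_
          have hx' := (Finset.mem_filter.mp hx).2
          simp only [habar, if_pos hx']
          exact (Int.mul_ediv_cancel' (hdvd x hx')).symm
        rw [Finset.gcd_mul_left] at h1
        have hnorm : normalize g = g := by rw [hg]; exact Finset.normalize_gcd
        rw [hnorm] at h1
        have : g * 1 = g * (Finset.univ.filter fun j : Fin m => i + 1 ≤ (j : ℕ)).gcd abar := by
          rw [mul_one]; exact h1
        exact (mul_left_cancel₀ hg0 this).symm
      obtain ⟨A', B', hA'B', hA'rows, hA'row⟩ := ih (i + 1) hi1 abar (by omega) hgA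
      -- Bezout
      have hcop : IsCoprime (a ⟨i, him⟩) g := by
        rw [Int.isCoprime_iff_gcd_eq_one]
        have := hgcd
        rw [← Int.coe_gcd] at this
        exact_mod_cast this
      obtain ⟨p, q, hpq⟩ := hcop
      set iF : Fin m := ⟨i, him⟩ with hiF
      set iF1 : Fin m := ⟨i + 1, hi1⟩ with hiF1
      have hne : iF ≠ iF1 := by simp [hiF, hiF1, Fin.ext_iff]
      set t : Fin m → ℤ := fun j => if j = iF then 1 else if (j : ℕ) < i then a j else 0 with ht
      have htiF : t iF = 1 := by simp [ht]
      have hT := uPiv_mul_inv iF t (by rw [htiF]; ring)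
      set C₂ := twoAt iF iF1 (a iF) g (-q) p with hC₂
      set C₂' := twoAt iF iF1 p (-g) q (a iF) with hC₂'
      have hC : C₂ * C₂' = 1 := by
        rw [hC₂, hC₂', twoAt_mul_twoAt _ _ hne]
        rw [show a iF * p + g * q = 1 by linarith,
            show a iF * -g + g * a iF = 0 by ring,
            show -q * p + p * q = 0 by ring,
            show -q * -g + p * a iF = 1 by linarith]
        exact twoAt_id _ _ hne
      set X := C₂ * A' with hX
      have hXlt : ∀ x : Fin m, (x : ℕ) < i → ∀ jj, X x jj = if x = jj then 1 else 0 := by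
        intro x hx jj
        have hx1 : x ≠ iF := by simp [hiF, Fin.ext_iff]; omega
        have hx2 : x ≠ iF1 := by simp [hiF1, Fin.ext_iff]; omega
        rw [hX, row_delta_mul (twoAt_row_ne _ _ _ _ _ _ hx1 hx2)]
        exact hA'rows x (by omega) jj
      have hXi : ∀ jj, X iF jj = a iF * (if iF = jj then 1 else 0) + g * abar jj := by
        intro jj
        rw [hX, hC₂, twoAt_mul_row_i _ _ hne]
        rw [hA'rows iF (by simp [hiF]) jj, hA'row jj]
      refine ⟨uPiv iF t * X, (B' * C₂') * uPiv iF (fun jj => if jj = iF then t iF else -(t iF * t jj)), ?_, ?_, ?_⟩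
      · -- product is 1
        have h1 : X * (B' * C₂') = 1 := by
          rw [hX, Matrix.mul_assoc, ← Matrix.mul_assoc A' B', hA'B', Matrix.one_mul, hC]
        rw [Matrix.mul_assoc, ← Matrix.mul_assoc X, h1, Matrix.one_mul, hT]
      · -- rows below i
        intro j hj jj
        have hj1 : j ≠ iF := by simp [hiF, Fin.ext_iff]; omega
        rw [row_delta_mul (uPiv_row_ne iF t hj1)]
        exact hXlt j hj jj
      · -- row i
        intro jj
        rw [Matrix.mul_apply, ← Finset.sum_erase_add _ _ (Finset.mem_univ iF)]
        have hsum : ∑ x ∈ Finset.univ.erase iF, uPiv iF t iF x * X x jj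
            = ∑ x ∈ Finset.univ.erase iF,
              (if x = jj then (if (x:ℕ) < i then a x else 0) else 0) := by
          refine Finset.sum_congr rfl fun x hx => ?_
          have hxiF : x ≠ iF := (Finset.mem_erase.mp hx).1
          rw [uPiv_row_self]
          by_cases hxi : (x : ℕ) < i
          · rw [hXlt x hxi jj]
            simp [ht, hxiF, hxi, mul_ite]
          · simp [ht, hxiF, hxi]
        rw [hsum, Finset.sum_ite_eq', uPiv_row_self, htiF, one_mul, hXi]
        rcases lt_trichotomy ((jj : ℕ)) i with hlt | heq | hgt
        · have h1 : jj ∈ Finset.univ.erase iF := by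
            simp [hiF, Finset.mem_erase, Fin.ext_iff]; omega
          rw [if_pos h1, if_pos hlt]
          have h2 : iF ≠ jj := by simp [hiF, Fin.ext_iff]; omega
          rw [if_neg h2]
          simp only [habar, if_neg (by omega : ¬ i + 1 ≤ (jj : ℕ))]
          ring
        · have h1 : jj = iF := by simp [hiF, Fin.ext_iff]; omega
          rw [if_neg (by simp [h1]), if_pos h1.symm]
          simp [habar, h1, hiF]
        · have h1 : jj ∈ Finset.univ.erase iF := by
            simp [hiF, Finset.mem_erase, Fin.ext_iff]; omega
          rw [if_pos h1, if_neg (by omega : ¬ (jj:ℕ) < i)]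
          have h2 : iF ≠ jj := by simp [hiF, Fin.ext_iff]; omega
          rw [if_neg h2]
          simp only [habar, if_pos (by omega : i + 1 ≤ (jj : ℕ))]
          rw [mul_zero, zero_add, zero_add, Int.mul_ediv_cancel' (hdvd jj (by omega))]
end Key

section BasisPart
variable {m : ℕ} {M : Type*} [AddCommGroup M] [Module ℤ M]

noncomputable def matEquiv (A B : Matrix (Fin m) (Fin m) ℤ) (hAB : A * B = 1) :
    (Fin m → ℤ) ≃ₗ[ℤ] (Fin m → ℤ) :=
  LinearEquiv.ofLinear (Matrix.mulVecLin Aᵀ) (Matrix.mulVecLin Bᵀ)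
    (by
      rw [← Matrix.mulVecLin_mul, ← Matrix.transpose_mul, mul_eq_one_comm.mp hAB,
        Matrix.transpose_one, Matrix.mulVecLin_one])
    (by
      rw [← Matrix.mulVecLin_mul, ← Matrix.transpose_mul, hAB,
        Matrix.transpose_one, Matrix.mulVecLin_one])

noncomputable def basisOfMul (b : Module.Basis (Fin m) ℤ M) (A B : Matrix (Fin m) (Fin m) ℤ)
    (hAB : A * B = 1) : Module.Basis (Fin m) ℤ M :=
  b.map ((b.equivFun.trans (matEquiv A B hAB)).trans b.equivFun.symm)

lemma basisOfMul_apply (b : Module.Basis (Fin m) ℤ M) (A B : Matrix (Fin m) (Fin m) ℤ)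
    (hAB : A * B = 1) (j : Fin m) :
    basisOfMul b A B hAB j = ∑ k, A j k • b k := by
  rw [basisOfMul, Module.Basis.map_apply, LinearEquiv.trans_apply, LinearEquiv.trans_apply,
    Module.Basis.equivFun_apply, Module.Basis.repr_self]
  have h1 : (matEquiv A B hAB) ⇑(Finsupp.single j (1:ℤ)) = fun k => A j k := by
    show Matrix.mulVecLin Aᵀ _ = _
    rw [Finsupp.single_eq_pi_single, Matrix.mulVecLin_apply, Matrix.mulVec_single]
    funext k
    simp [Matrix.transpose_apply]
  rw [h1, Module.Basis.equivFun_symm_apply]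
  exact Finset.sum_congr rfl fun k _ => (int_smul_eq_zsmul _ _ _)

lemma key_lemma (b : Module.Basis (Fin m) ℤ M) (i : Fin m) (a : Fin m → ℤ)
    (h : (Finset.univ.filter fun j : Fin m => i ≤ j).gcd a = 1) :
    ∃ c : Module.Basis (Fin m) ℤ M, (∀ j, j < i → c j = b j) ∧ c i = ∑ j, a j • b j := by
  have hfs : (Finset.univ.filter fun j : Fin m => i ≤ j) =
      (Finset.univ.filter fun j : Fin m => (i : ℕ) ≤ (j : ℕ)) := by
    ext x; simp only [Finset.mem_filter, Fin.le_def]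
  rw [hfs] at h
  obtain ⟨A, B, hAB, hrows, hrow⟩ := keyMatrix (m - (i : ℕ) - 1) (i : ℕ) i.isLt a (by omega) h
  simp only [Fin.eta] at hrow
  refine ⟨basisOfMul b A B hAB, ?_, ?_⟩
  · intro j hj
    rw [basisOfMul_apply]
    rw [Finset.sum_congr rfl (fun k _ => by rw [hrows j hj k])]
    simp
  · rw [basisOfMul_apply]
    exact Finset.sum_congr rfl fun k _ => by rw [hrow k]

end BasisPart

section Analytic

variable {n m : ℕ}

lemma exists_min_norm (L : AddSubgroup (EuclideanSpace ℝ (Fin n))) [DiscreteTopology L]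
    (s : Set L) (hs : s.Nonempty) :
    ∃ x ∈ s, ∀ y ∈ s, ‖(x : EuclideanSpace ℝ (Fin n))‖ ≤ ‖(y : EuclideanSpace ℝ (Fin n))‖ := by
  obtain ⟨x₀, hx₀⟩ := hs
  set K : Set (EuclideanSpace ℝ (Fin n)) :=
    Metric.closedBall 0 ‖(x₀ : EuclideanSpace ℝ (Fin n))‖ ∩ (L : Set (EuclideanSpace ℝ (Fin n)))
    with hK
  have hLd : DiscreteTopology ((L : Set (EuclideanSpace ℝ (Fin n)))) :=
    inferInstanceAs (DiscreteTopology L)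
  have hKc : IsCompact K :=
    (isCompact_closedBall _ _).inter_right (AddSubgroup.isClosed_of_discrete)
  have hKd : DiscreteTopology K :=
    DiscreteTopology.of_subset hLd Set.inter_subset_right
  have hKf : K.Finite := hKc.finite (isDiscrete_iff_discreteTopology.mpr hKd)
  set T : Set L := {y ∈ s | ‖(y : EuclideanSpace ℝ (Fin n))‖ ≤ ‖(x₀ : EuclideanSpace ℝ (Fin n))‖}
    with hT
  have hTf : T.Finite := by
    have hsub : T ⊆ (fun y : L => (y : EuclideanSpace ℝ (Fin n))) ⁻¹' K := by
      intro y hy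
      simp only [Set.mem_preimage, hK, Set.mem_inter_iff, Metric.mem_closedBall,
        dist_zero_right]
      exact ⟨hy.2, y.2⟩
    exact Set.Finite.subset (hKf.preimage (Subtype.coe_injective.injOn)) hsub
  have hTne : T.Nonempty := ⟨x₀, hx₀, le_refl _⟩
  obtain ⟨x, hxT, hxmin⟩ := Set.exists_min_image T
    (fun y => ‖(y : EuclideanSpace ℝ (Fin n))‖) hTf hTne
  refine ⟨x, hxT.1, fun y hy => ?_⟩
  by_cases hyb : ‖(y : EuclideanSpace ℝ (Fin n))‖ ≤ ‖(x₀ : EuclideanSpace ℝ (Fin n))‖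
  · exact hxmin y ⟨hy, hyb⟩
  · have h1 := hxT.2
    linarith [h1, not_le.mp hyb]

lemma greedy (L : AddSubgroup (EuclideanSpace ℝ (Fin n))) [DiscreteTopology L]
    (b₀ : Module.Basis (Fin m) ℤ L) (N : ℕ) :
    ∃ c : Module.Basis (Fin m) ℤ L, ∀ j : Fin m, (j : ℕ) < N →
      ∀ v : L, (∃ d : Module.Basis (Fin m) ℤ L, (∀ j' : Fin m, j' < j → d j' = c j') ∧ d j = v) →
        ‖(c j : EuclideanSpace ℝ (Fin n))‖ ≤ ‖(v : EuclideanSpace ℝ (Fin n))‖ := by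
  induction N with
  | zero => exact ⟨b₀, fun j hj => absurd hj (by omega)⟩
  | succ N ihN =>
    obtain ⟨c, hc⟩ := ihN
    by_cases hNm : N < m
    · set jN : Fin m := ⟨N, hNm⟩ with hjN
      set S : Set L :=
        {v | ∃ d : Module.Basis (Fin m) ℤ L, (∀ j' : Fin m, j' < jN → d j' = c j') ∧ d jN = v} with hS
      have hSne : S.Nonempty := ⟨c jN, c, fun _ _ => rfl, rfl⟩
      obtain ⟨v, hvS, hvmin⟩ := exists_min_norm L S hSne
      obtain ⟨d, hdpre, hdv⟩ := hvS
      refine ⟨d, fun j hj w hw => ?_⟩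
      obtain ⟨d', hd'pre, hd'w⟩ := hw
      by_cases hjlt : (j : ℕ) < N
      · have hjjN : j < jN := by simp [hjN, Fin.lt_def]; omega
        have hdj : d j = c j := hdpre j hjjN
        rw [hdj]
        refine hc j hjlt w ⟨d', fun j' hj' => ?_, hd'w⟩
        rw [hd'pre j' hj', hdpre j' (lt_trans hj' hjjN)]
      · have hjeq : j = jN := Fin.ext (by simp [hjN]; omega)
        subst hjeq
        rw [hdv]
        refine hvmin w ⟨d', fun j' hj' => ?_, hd'w⟩
        rw [hd'pre j' hj', hdpre j' hj']
    · exact ⟨c, fun j hj => hc j (by omega)⟩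

end Analytic

/-- **Existence of a Minkowski basis.**  Every lattice of rank `m` in `ℝ^n`
(a discrete subgroup admitting a `ℤ`-basis indexed by `Fin m`) admits a
Minkowski basis, i.e. a `ℤ`-basis `b₁, …, b_m` such that for every `i` and
every integer vector `(a₁, …, a_m)` with `gcd(a_i, …, a_m) = 1` one has
`‖b_i‖ ≤ ‖∑_j a_j b_j‖`. -/
theorem minkowski_basis_exists (n m : ℕ)
    (L : AddSubgroup (EuclideanSpace ℝ (Fin n))) (hL : DiscreteTopology L)
    (b₀ : Module.Basis (Fin m) ℤ L) :
    ∃ b : Module.Basis (Fin m) ℤ L, ∀ i : Fin m, ∀ a : Fin m → ℤ,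
      (Finset.univ.filter fun j : Fin m => i ≤ j).gcd a = 1 →
      ‖((b i : L) : EuclideanSpace ℝ (Fin n))‖ ≤
        ‖(((∑ j : Fin m, a j • b j : L)) : EuclideanSpace ℝ (Fin n))‖ := by
  haveI := hL
  obtain ⟨c, hc⟩ := greedy L b₀ m
  refine ⟨c, fun i a hgcd => ?_⟩
  obtain ⟨d, hdpre, hdi⟩ := key_lemma c i a hgcd
  exact hc i i.isLt _ ⟨d, hdpre, hdi⟩
end

section
/- Fix a number field F. There exists a constant C > 0 depending only on F such that every nonzero integral ideal 𝔞 that is principal admits a generator α ∈ O_F with H_F(α) ≤ C · N_{F/ℚ}(𝔞), where H_F is the multiplicative Weil height relative to F and N_{F/ℚ} is the absolute norm. -/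
open NumberField IsDedekindDomain Multiplicative
open scoped NNReal

noncomputable def finHeight (K : Type*) [Field K] [NumberField K] (α : K) : ℝ :=
  ∏ᶠ v : HeightOneSpectrum (𝓞 K),
    max 1 ((WithZeroMulInt.toNNReal
      (show ((Ideal.absNorm v.asIdeal : ℝ≥0)) ≠ 0 by
        simp only [ne_eq, Nat.cast_eq_zero, Ideal.absNorm_eq_zero_iff]
        exact v.ne_bot)
      (v.valuation K α) : ℝ≥0) : ℝ)

/-- The multiplicative Weil height of `α` relative to `K`:
`H_K(α) = ∏_v max(1, |α|_v^{d_v})`, the product over all (finite and infinite) places. -/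
noncomputable def mulHeight (K : Type*) [Field K] [NumberField K] (α : K) : ℝ :=
  (∏ w : InfinitePlace K, max 1 ((w α) ^ w.mult)) * finHeight K α


open Bornology Module NumberField.mixedEmbedding NumberField.Units
open NumberField.Units.dirichletUnitTheorem NumberField.InfinitePlace

lemma finHeight_eq_one_aux (F : Type*) [Field F] [NumberField F] (β : 𝓞 F)
    (v : HeightOneSpectrum (𝓞 F))
    (h0 : ((Ideal.absNorm v.asIdeal : ℝ≥0)) ≠ 0) :
    max 1 ((WithZeroMulInt.toNNReal h0 (v.valuation F (algebraMap (𝓞 F) F β)) : ℝ≥0) : ℝ) = 1 := by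
  have hne1 : Ideal.absNorm v.asIdeal ≠ 1 := fun h =>
    v.isPrime.ne_top (Ideal.absNorm_eq_one_iff.mp h)
  have hne0 : Ideal.absNorm v.asIdeal ≠ 0 := by
    simpa [Ideal.absNorm_eq_zero_iff] using v.ne_bot
  have h1 : (1 : ℝ≥0) < (Ideal.absNorm v.asIdeal : ℝ≥0) := by
    have : 1 < Ideal.absNorm v.asIdeal := by omega
    exact_mod_cast this
  have hle : v.valuation F (algebraMap (𝓞 F) F β) ≤ 1 := v.valuation_le_one β
  have := (WithZeroMulInt.toNNReal_le_one_iff h1).mpr hle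
  rw [max_eq_left]
  exact_mod_cast this

lemma cone_prod_bound (F : Type*) [Field F] [NumberField F] :
    ∃ C : ℝ, 0 < C ∧ ∀ y : mixedSpace F, y ∈ fundamentalCone F →
      1 ≤ mixedEmbedding.norm y →
      (∏ w : InfinitePlace F, max 1 ((normAtPlace w y) ^ (mult w))) ≤
        C * mixedEmbedding.norm y := by
  classical
  obtain ⟨R, hR⟩ := isBounded_iff_forall_norm_le.mp
    (ZSpan.fundamentalDomain_isBounded ((basisUnitLattice F).ofZLatticeBasis ℝ _))
  set R' : ℝ := max R 0 with hR'def
  have hR'0 : 0 ≤ R' := le_max_right _ _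
  set n : ℕ := Fintype.card (InfinitePlace F) with hn
  have hn1 : (1 : ℝ) ≤ (n : ℝ) := by exact_mod_cast Fintype.card_pos
  refine ⟨Real.exp ((n : ℝ) ^ 2 * R'), Real.exp_pos _, fun y hy hN ↦ ?_⟩
  set N : ℝ := mixedEmbedding.norm y with hNdef
  have hN0 : 0 < N := lt_of_lt_of_le one_pos hN
  have hlogN : 0 ≤ Real.log N := Real.log_nonneg hN
  have hd0 : 0 < (finrank ℚ F : ℝ) := by exact_mod_cast finrank_pos
  set d : ℝ := (finrank ℚ F : ℝ) with hd
  have hpos : ∀ w : InfinitePlace F, 0 < normAtPlace w y :=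
    fundamentalCone.normAtPlace_pos_of_mem hy
  set L : InfinitePlace F → ℝ := fun w => (mult w : ℝ) * Real.log (normAtPlace w y) with hL
  have hsum : ∑ w, L w = Real.log N := by
    rw [hNdef, mixedEmbedding.norm_apply, Real.log_prod
      (fun w _ => pow_ne_zero _ (hpos w).ne')]
    exact Finset.sum_congr rfl fun w _ => (Real.log_pow _ _).symm
  have hbound : ∀ w : InfinitePlace F, w ≠ (w₀ : InfinitePlace F) →
      |L w - (mult w : ℝ) * (Real.log N * d⁻¹)| ≤ R' := by
    intro w hw
    have h1 := hR _ hy.1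
    have h2 := (norm_le_pi_norm (logMap y) ⟨w, hw⟩).trans h1
    rw [logMap_apply, Real.norm_eq_abs, mul_sub] at h2
    exact h2.trans (le_max_left _ _)
  have hmain : ∀ w : InfinitePlace F,
      L w ≤ (mult w : ℝ) / d * Real.log N + (n : ℝ) * R' := by
    intro w
    by_cases hw : w = (w₀ : InfinitePlace F)
    · subst hw
      have hsplit : L (w₀ : InfinitePlace F) = Real.log N - ∑ w ∈ Finset.univ.erase (w₀ : InfinitePlace F), L w := by
        rw [← hsum, ← Finset.add_sum_erase _ _ (Finset.mem_univ (w₀ : InfinitePlace F))]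
        ring
      have hlow : ∀ w ∈ Finset.univ.erase (w₀ : InfinitePlace F),
          (mult w : ℝ) / d * Real.log N - R' ≤ L w := by
        intro w hw'
        have h := (abs_le.mp (hbound w (Finset.ne_of_mem_erase hw'))).1
        have e : (mult w : ℝ) * (Real.log N * d⁻¹) = (mult w : ℝ) / d * Real.log N := by ring
        linarith [e ▸ h]
      have hsumlow : ∑ w ∈ Finset.univ.erase (w₀ : InfinitePlace F),
          ((mult w : ℝ) / d * Real.log N - R') ≤ ∑ w ∈ Finset.univ.erase (w₀ : InfinitePlace F), L w :=
        Finset.sum_le_sum hlow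
      have hmultsum : ∑ w ∈ Finset.univ.erase (w₀ : InfinitePlace F), (mult w : ℝ) = d - (mult (w₀ : InfinitePlace F) : ℝ) := by
        rw [Finset.sum_erase_eq_sub (Finset.mem_univ _)]
        congr 1
        rw [hd, ← sum_mult_eq (K := F)]
        push_cast
        rfl
      have hcard : ((Finset.univ.erase (w₀ : InfinitePlace F)).card : ℝ) ≤ (n : ℝ) := by
        exact_mod_cast Finset.card_le_card (Finset.subset_univ _)
      have hsumval : ∑ w ∈ Finset.univ.erase (w₀ : InfinitePlace F),
          ((mult w : ℝ) / d * Real.log N - R')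
            = (d - (mult (w₀ : InfinitePlace F) : ℝ)) / d * Real.log N - ((Finset.univ.erase (w₀ : InfinitePlace F)).card : ℝ) * R' := by
        rw [Finset.sum_sub_distrib, Finset.sum_const, nsmul_eq_mul]
        congr 1
        rw [← hmultsum, Finset.sum_div, Finset.sum_mul]
      have key : Real.log N - ((d - (mult (w₀ : InfinitePlace F) : ℝ)) / d * Real.log N)
          = (mult (w₀ : InfinitePlace F) : ℝ) / d * Real.log N := by
        field_simp
        ring
      have hcR : ((Finset.univ.erase (w₀ : InfinitePlace F)).card : ℝ) * R' ≤ (n : ℝ) * R' :=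
        mul_le_mul_of_nonneg_right hcard hR'0
      rw [hsplit]
      rw [hsumval] at hsumlow
      linarith
    · have h := (abs_le.mp (hbound w hw)).2
      have e : (mult w : ℝ) * (Real.log N * d⁻¹) = (mult w : ℝ) / d * Real.log N := by ring
      have hRn : R' ≤ (n : ℝ) * R' := by nlinarith
      linarith [e ▸ h]
  calc ∏ w : InfinitePlace F, max 1 ((normAtPlace w y) ^ (mult w))
      ≤ ∏ w : InfinitePlace F, Real.exp ((mult w : ℝ) / d * Real.log N + (n : ℝ) * R') := by
        refine Finset.prod_le_prod (fun w _ => le_max_of_le_left zero_le_one) (fun w _ => ?_)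
        have ht0 : 0 ≤ (mult w : ℝ) / d * Real.log N + (n : ℝ) * R' := by
          have : 0 ≤ (mult w : ℝ) / d * Real.log N :=
            mul_nonneg (div_nonneg (Nat.cast_nonneg _) hd0.le) hlogN
          nlinarith
        refine max_le (Real.one_le_exp ht0) ?_
        rw [← Real.log_le_iff_le_exp (pow_pos (hpos w) _), Real.log_pow]
        exact hmain w
    _ = Real.exp (∑ w : InfinitePlace F, ((mult w : ℝ) / d * Real.log N + (n : ℝ) * R')) :=
        (Real.exp_sum _ _).symm
    _ = Real.exp ((n : ℝ) ^ 2 * R') * N := by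
        have hs : ∑ w : InfinitePlace F, ((mult w : ℝ) / d * Real.log N + (n : ℝ) * R')
            = Real.log N + (n : ℝ) ^ 2 * R' := by
          rw [Finset.sum_add_distrib, Finset.sum_const, Finset.card_univ, nsmul_eq_mul, ← hn]
          have h1 : ∑ w : InfinitePlace F, ((mult w : ℝ) / d * Real.log N) = Real.log N := by
            rw [← Finset.sum_mul, ← Finset.sum_div]
            have : ∑ w : InfinitePlace F, (mult w : ℝ) = d := by
              rw [hd, ← sum_mult_eq (K := F)]; push_cast; rfl
            rw [this, div_self hd0.ne', one_mul]
          rw [h1]; ring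
        rw [hs, Real.exp_add, Real.exp_log hN0, mul_comm]

lemma finHeight_algebraMap (F : Type*) [Field F] [NumberField F] (β : 𝓞 F) :
    finHeight F (algebraMap (𝓞 F) F β) = 1 := by
  rw [finHeight]
  exact finprod_eq_one_of_forall_eq_one fun v => finHeight_eq_one_aux F β v _

/-- There is a constant `C > 0` depending only on the number field `F` such that every nonzero
principal integral ideal `𝔞` admits a generator `α` with `H_F(α) ≤ C · N_{F/ℚ}(𝔞)`. -/
theorem exists_small_generator (F : Type*) [Field F] [NumberField F] :
    ∃ C : ℝ, 0 < C ∧ ∀ 𝔞 : Ideal (𝓞 F), 𝔞 ≠ ⊥ → Submodule.IsPrincipal 𝔞 →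
      ∃ α : 𝓞 F, 𝔞 = Ideal.span {α} ∧
        mulHeight F (algebraMap (𝓞 F) F α) ≤ C * (Ideal.absNorm 𝔞 : ℝ) := by
  obtain ⟨C, hC, hbound⟩ := cone_prod_bound F
  refine ⟨C, hC, fun 𝔞 h𝔞 hP => ?_⟩
  obtain ⟨α₀, hα₀'⟩ := hP.principal
  have hα₀ : 𝔞 = Ideal.span {α₀} := hα₀'
  have hα₀0 : α₀ ≠ 0 := by
    rintro rfl
    exact h𝔞 (hα₀.trans (by simp))
  have hcoe0 : (algebraMap (𝓞 F) F α₀) ≠ 0 := by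
    simpa using hα₀0
  have hnz : Algebra.norm ℚ (algebraMap (𝓞 F) F α₀) ≠ 0 := Algebra.norm_ne_zero_iff.mpr hcoe0
  have hx0 : mixedEmbedding.norm (mixedEmbedding F (algebraMap (𝓞 F) F α₀)) ≠ 0 := by
    rw [norm_eq_norm]
    exact_mod_cast abs_ne_zero.mpr hnz
  obtain ⟨u, hu⟩ := fundamentalCone.exists_unit_smul_mem hx0
  refine ⟨(u : 𝓞 F) * α₀, ?_, ?_⟩
  · rw [hα₀]
    exact Ideal.span_singleton_eq_span_singleton.mpr ⟨u, mul_comm α₀ u⟩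
  · have hemb : mixedEmbedding F (algebraMap (𝓞 F) F ((u : 𝓞 F) * α₀))
        = u • mixedEmbedding F (algebraMap (𝓞 F) F α₀) := by
      rw [unitSMul_smul, ← map_mul, ← map_mul]
    have hNa : 1 ≤ Ideal.absNorm 𝔞 := by
      rw [Nat.one_le_iff_ne_zero, ne_eq, Ideal.absNorm_eq_zero_iff]
      exact h𝔞
    have hnorm : mixedEmbedding.norm (u • mixedEmbedding F (algebraMap (𝓞 F) F α₀))
        = (Ideal.absNorm 𝔞 : ℝ) := by
      rw [norm_unit_smul, norm_eq_norm, hα₀, Ideal.absNorm_span_singleton,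
        Nat.cast_natAbs, ← Rat.cast_intCast, Int.cast_abs, Algebra.coe_norm_int]
    have hN1 : (1 : ℝ) ≤ mixedEmbedding.norm (u • mixedEmbedding F (algebraMap (𝓞 F) F α₀)) := by
      rw [hnorm]; exact_mod_cast hNa
    have h := hbound _ hu hN1
    rw [hnorm] at h
    rw [mulHeight, finHeight_algebraMap, mul_one]
    refine le_trans (le_of_eq ?_) h
    refine Finset.prod_congr rfl fun w _ => ?_
    rw [← hemb, normAtPlace_apply]
end

section
/- Let K/k be an extension of number fields of degree d ≥ 2, and let α ∈ K with α O_K = (𝔓₁ 𝔓₂^{-1})^ℓ as fractional ideals, where 𝔓₁ ≠ 𝔓₂ are prime ideals of O_K of ramification index and inertia degree 1 over k, and ℓ ≥ 1. Then K = k(α); i.e., α has degree d over k. -/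
open NumberField IsDedekindDomain Multiplicative
open scoped NNReal nonZeroDivisors

open UniqueFactorizationMonoid in
lemma count_map_algebraMap' {R S : Type*} [CommRing R] [IsDedekindDomain R]
    [CommRing S] [IsDedekindDomain S] [Algebra R S]
    [DecidableEq (Ideal R)] [DecidableEq (Ideal S)]
    (hinj : Function.Injective (algebraMap R S))
    {I : Ideal R} (hI : I ≠ ⊥) {Q : Ideal S} [hQp : Q.IsPrime] (hQ0 : Q ≠ ⊥)
    (hq0 : Q.comap (algebraMap R S) ≠ ⊥) :
    (normalizedFactors (I.map (algebraMap R S))).count Q =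
      Ideal.ramificationIdx' (Q.comap (algebraMap R S)) Q *
        (normalizedFactors I).count (Q.comap (algebraMap R S)) := by
  set f := algebraMap R S with hf
  set q := Q.comap f with hq
  haveI hqp : q.IsPrime := hQp.comap f
  haveI : q.IsMaximal := Ring.DimensionLEOne.maximalOfPrime hq0 hqp
  obtain ⟨J, hcop, hIeq⟩ := Ideal.eq_prime_pow_mul_coprime hI q
  set n := (normalizedFactors I).count q with hn
  have hJ0 : J ≠ ⊥ := by rintro rfl; rw [Ideal.mul_bot] at hIeq; exact hI hIeq
  have hmapq : q.map f ≠ ⊥ := by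
    rwa [Ne, Ideal.map_eq_bot_iff_of_injective hinj]
  have hmapJ : J.map f ≠ ⊥ := by
    rwa [Ne, Ideal.map_eq_bot_iff_of_injective hinj]
  have hcount0 : (normalizedFactors (J.map f)).count Q = 0 := by
    rw [Multiset.count_eq_zero]
    intro hmem
    have h1 : J.map f ≤ Q := Ideal.le_of_dvd (dvd_of_mem_normalizedFactors hmem)
    have h2 : q.map f ≤ Q := Ideal.map_comap_le
    have htop : (⊤ : Ideal S) ≤ Q := by
      rw [← Ideal.map_top f, ← hcop, Ideal.map_sup]; exact sup_le h2 h1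
    exact hQp.ne_top (top_le_iff.mp htop)
  have heq2 : I.map f = (q.map f) ^ n * J.map f := by
    rw [hIeq, Ideal.map_mul, Ideal.map_pow]; congr
  rw [heq2, normalizedFactors_mul (pow_ne_zero _ hmapq) hmapJ, Multiset.count_add,
    hcount0, add_zero, normalizedFactors_pow, Multiset.count_nsmul,
    Ideal.IsDedekindDomain.ramificationIdx'_eq_normalizedFactors_count hmapq hQp hQ0]
  rw [Nat.mul_comm]; congr

set_option maxHeartbeats 1000000 in
open UniqueFactorizationMonoid in
/-- If `K/k` has degree `d ≥ 2` and `α O_K = (𝔓₁ 𝔓₂⁻¹)^ℓ` for distinct primes `𝔓₁ ≠ 𝔓₂`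
of `O_K` of ramification index and inertia degree `1` over `k`, then `K = k(α)`. -/
theorem adjoin_eq_top_of_span_eq_pow (k K : Type*) [Field k] [Field K]
    [NumberField k] [NumberField K] [Algebra k K]
    (d : ℕ) (hd : 2 ≤ d) (hdeg : Module.finrank k K = d)
    (ℓ : ℕ) (hℓ : 1 ≤ ℓ) (α : K)
    (P₁ P₂ : Ideal (𝓞 K)) (hP₁ : P₁.IsPrime) (hP₂ : P₂.IsPrime)
    (hP₁0 : P₁ ≠ ⊥) (hP₂0 : P₂ ≠ ⊥) (hne : P₁ ≠ P₂)
    (he₁ : Ideal.ramificationIdx'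
      (P₁.comap (algebraMap (𝓞 k) (𝓞 K))) P₁ = 1)
    (hf₁ : Ideal.inertiaDeg'
      (P₁.comap (algebraMap (𝓞 k) (𝓞 K))) P₁ = 1)
    (he₂ : Ideal.ramificationIdx'
      (P₂.comap (algebraMap (𝓞 k) (𝓞 K))) P₂ = 1)
    (hf₂ : Ideal.inertiaDeg'
      (P₂.comap (algebraMap (𝓞 k) (𝓞 K))) P₂ = 1)
    (hα : FractionalIdeal.spanSingleton (𝓞 K)⁰ α =
      ((P₁ : FractionalIdeal (𝓞 K)⁰ K) * (P₂ : FractionalIdeal (𝓞 K)⁰ K)⁻¹) ^ ℓ) :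
    IntermediateField.adjoin k {α} = ⊤ := by
  classical
  haveI := hP₁; haveI := hP₂
  set L := IntermediateField.adjoin k {α} with hLdef
  have hαL : α ∈ L := IntermediateField.mem_adjoin_simple_self k α
  -- nonvanishing
  have hP₁c : (P₁ : FractionalIdeal (𝓞 K)⁰ K) ≠ 0 := FractionalIdeal.coeIdeal_ne_zero.mpr hP₁0
  have hP₂c : (P₂ : FractionalIdeal (𝓞 K)⁰ K) ≠ 0 := FractionalIdeal.coeIdeal_ne_zero.mpr hP₂0
  have hα0 : α ≠ 0 := by
    intro h
    rw [h, FractionalIdeal.spanSingleton_zero] at hα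
    exact pow_ne_zero ℓ (mul_ne_zero hP₁c (inv_ne_zero hP₂c)) hα.symm
  -- the subfield L and its ring of integers
  set R := 𝓞 ↥L with hRdef
  set f : R →+* 𝓞 K := algebraMap R (𝓞 K) with hfdef
  have hinj : Function.Injective f := NumberField.RingOfIntegers.algebraMap.injective ↥L K
  have hinjk : Function.Injective (algebraMap (𝓞 k) (𝓞 K)) :=
    NumberField.RingOfIntegers.algebraMap.injective k K
  -- write α = a / b with a b : R
  obtain ⟨a, b, hbmem, hab⟩ := IsFractionRing.div_surjective (A := R) (⟨α, hαL⟩ : ↥L)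
  have hb0 : b ≠ 0 := nonZeroDivisors.ne_zero hbmem
  set a' : 𝓞 K := f a with ha'def
  set b' : 𝓞 K := f b with hb'def
  have hb'0 : b' ≠ 0 := fun h => hb0 (hinj (by simpa using h))
  have hbL0 : (algebraMap R ↥L) b ≠ 0 :=
    IsFractionRing.to_map_ne_zero_of_mem_nonZeroDivisors hbmem
  have hkey : algebraMap (𝓞 K) K a' = α * algebraMap (𝓞 K) K b' := by
    have h1 : (algebraMap R ↥L a : ↥L) = (⟨α, hαL⟩ : ↥L) * algebraMap R ↥L b := by
      rw [← hab, div_mul_cancel₀ _ hbL0]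
    have h2 := congrArg (algebraMap ↥L K) h1
    rw [map_mul] at h2
    rw [ha'def, hb'def, ← IsScalarTower.algebraMap_apply R (𝓞 K) K,
      ← IsScalarTower.algebraMap_apply R (𝓞 K) K,
      IsScalarTower.algebraMap_apply R ↥L K, IsScalarTower.algebraMap_apply R ↥L K, h2]
    rfl
  have ha'0 : a' ≠ 0 := by
    intro h
    apply mul_ne_zero hα0 ((map_ne_zero_iff _ (NumberField.RingOfIntegers.coe_injective)).mpr hb'0)
    rw [← hkey, h, map_zero]
  have ha0 : a ≠ 0 := fun h => ha'0 (by rw [ha'def, h, map_zero])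
  -- the ideal equation in 𝓞 K
  have hspan : FractionalIdeal.spanSingleton (𝓞 K)⁰ (algebraMap (𝓞 K) K a') *
      (P₂ : FractionalIdeal (𝓞 K)⁰ K) ^ ℓ =
      FractionalIdeal.spanSingleton (𝓞 K)⁰ (algebraMap (𝓞 K) K b') *
      (P₁ : FractionalIdeal (𝓞 K)⁰ K) ^ ℓ := by
    rw [hkey, ← FractionalIdeal.spanSingleton_mul_spanSingleton, hα, mul_pow, inv_pow]
    calc (P₁ : FractionalIdeal (𝓞 K)⁰ K) ^ ℓ * ((P₂ : FractionalIdeal (𝓞 K)⁰ K) ^ ℓ)⁻¹ *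
          FractionalIdeal.spanSingleton (𝓞 K)⁰ (algebraMap (𝓞 K) K b') *
          (P₂ : FractionalIdeal (𝓞 K)⁰ K) ^ ℓ
        = FractionalIdeal.spanSingleton (𝓞 K)⁰ (algebraMap (𝓞 K) K b') *
          (P₁ : FractionalIdeal (𝓞 K)⁰ K) ^ ℓ *
          (((P₂ : FractionalIdeal (𝓞 K)⁰ K) ^ ℓ)⁻¹ * (P₂ : FractionalIdeal (𝓞 K)⁰ K) ^ ℓ) := by
          ring
      _ = _ := by rw [inv_mul_cancel₀ (pow_ne_zero ℓ hP₂c), mul_one]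
  have hid : Ideal.span {a'} * P₂ ^ ℓ = Ideal.span {b'} * P₁ ^ ℓ := by
    rw [← FractionalIdeal.coeIdeal_inj (K := K)]
    push_cast
    rw [FractionalIdeal.coeIdeal_span_singleton, FractionalIdeal.coeIdeal_span_singleton,
      FractionalIdeal.coeIdeal_pow, FractionalIdeal.coeIdeal_pow]
    exact hspan
  -- primes below in R
  set q₁ : Ideal R := P₁.comap f with hq₁def
  haveI hq₁p : q₁.IsPrime := hP₁.comap f
  obtain ⟨x, hxP, hx0⟩ := (Submodule.ne_bot_iff _).mp hP₁0
  have hq₁0 : q₁ ≠ ⊥ :=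
    Ideal.comap_ne_bot_of_integral_mem hx0 hxP (Algebra.IsIntegral.isIntegral (R := R) x)
  haveI hq₁m : q₁.IsMaximal := Ring.DimensionLEOne.maximalOfPrime hq₁0 hq₁p
  set p₁ : Ideal (𝓞 k) := P₁.comap (algebraMap (𝓞 k) (𝓞 K)) with hp₁def
  haveI hp₁p : p₁.IsPrime := hP₁.comap _
  have hp₁0 : p₁ ≠ ⊥ :=
    Ideal.comap_ne_bot_of_integral_mem hx0 hxP (Algebra.IsIntegral.isIntegral (R := 𝓞 k) x)
  haveI hp₁m : p₁.IsMaximal := Ring.DimensionLEOne.maximalOfPrime hp₁0 hp₁p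
  have hmapq₁ : q₁.map f ≠ ⊥ := by rwa [Ne, Ideal.map_eq_bot_iff_of_injective hinj]
  have hmapp₁ : p₁.map (algebraMap (𝓞 k) (𝓞 K)) ≠ ⊥ := by
    rwa [Ne, Ideal.map_eq_bot_iff_of_injective hinjk]
  -- ramification and inertia over L are 1 at P₁
  have he₁' : Ideal.ramificationIdx' q₁ P₁ = 1 := by
    have ht := Ideal.ramificationIdx'_algebra_tower (R := 𝓞 k) (S := R) (T := 𝓞 K)
      (p := p₁) (P := q₁) (Q := P₁) hmapq₁ hmapp₁ Ideal.map_comap_le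
    rw [he₁] at ht
    exact Nat.eq_one_of_mul_eq_one_left ht.symm
  haveI : P₁.LiesOver q₁ := ⟨hq₁def⟩
  haveI : q₁.LiesOver p₁ := ⟨by
    rw [hq₁def, hp₁def]
    show P₁.comap (algebraMap (𝓞 k) (𝓞 K)) = (P₁.comap f).comap (algebraMap (𝓞 k) R)
    rw [Ideal.comap_comap, ← IsScalarTower.algebraMap_eq]⟩
  have hf₁' : Ideal.inertiaDeg' q₁ P₁ = 1 := by
    have ht := Ideal.inertiaDeg'_algebra_tower (R := 𝓞 k) (S := R) (T := 𝓞 K) p₁ q₁ P₁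
    rw [hf₁] at ht
    exact Nat.eq_one_of_mul_eq_one_left ht.symm
  -- ideals generated by a and b
  have hspanA : (Ideal.span {a} : Ideal R).map f = Ideal.span {a'} := by
    rw [Ideal.map_span, Set.image_singleton]
  have hspanB : (Ideal.span {b} : Ideal R).map f = Ideal.span {b'} := by
    rw [Ideal.map_span, Set.image_singleton]
  have hA0 : (Ideal.span {a} : Ideal R) ≠ ⊥ := by
    simpa [Ideal.span_singleton_eq_bot] using ha0
  have hB0 : (Ideal.span {b} : Ideal R) ≠ ⊥ := by
    simpa [Ideal.span_singleton_eq_bot] using hb0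
  have hmA : (Ideal.span {a'} : Ideal (𝓞 K)) ≠ ⊥ := by
    simpa [Ideal.span_singleton_eq_bot] using ha'0
  have hmB : (Ideal.span {b'} : Ideal (𝓞 K)) ≠ ⊥ := by
    simpa [Ideal.span_singleton_eq_bot] using hb'0
  set cA := (normalizedFactors (Ideal.span {a} : Ideal R)).count q₁ with hcA
  set cB := (normalizedFactors (Ideal.span {b} : Ideal R)).count q₁ with hcB
  -- counting the two sides of hid
  have hcnt : ∀ Q : Ideal (𝓞 K), Q.IsPrime → Q ≠ ⊥ →
      (normalizedFactors (Ideal.span {a'} : Ideal (𝓞 K))).count Q +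
        (normalizedFactors (P₂ ^ ℓ)).count Q =
      (normalizedFactors (Ideal.span {b'} : Ideal (𝓞 K))).count Q +
        (normalizedFactors (P₁ ^ ℓ)).count Q := by
    intro Q hQ hQ0
    rw [← Multiset.count_add, ← normalizedFactors_mul hmA (pow_ne_zero _ hP₂0), hid,
      normalizedFactors_mul hmB (pow_ne_zero _ hP₁0), Multiset.count_add]
  have hpowcnt : ∀ (X Y : Ideal (𝓞 K)), Y.IsPrime → Y ≠ ⊥ →
      (normalizedFactors (Y ^ ℓ)).count X = if X = Y then ℓ else 0 := by
    intro X Y hY hY0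
    rw [normalizedFactors_pow, Multiset.count_nsmul,
      normalizedFactors_irreducible (Ideal.prime_of_isPrime hY0 hY).irreducible, normalize_eq]
    by_cases h : X = Y <;> simp [h, Multiset.count_singleton]
  have hmain : ∀ Q : Ideal (𝓞 K), Q.IsPrime → Q ≠ ⊥ → Q.comap f = q₁ →
      Ideal.ramificationIdx' q₁ Q * cA + (if Q = P₂ then ℓ else 0) =
      Ideal.ramificationIdx' q₁ Q * cB + (if Q = P₁ then ℓ else 0) := by
    intro Q hQ hQ0 hQq
    haveI := hQ
    have h1 := hcnt Q hQ hQ0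
    have h2 := count_map_algebraMap' hinj hA0 (Q := Q) hQ0 (by rw [hQq]; exact hq₁0)
    have h3 := count_map_algebraMap' hinj hB0 (Q := Q) hQ0 (by rw [hQq]; exact hq₁0)
    rw [hspanA, hQq] at h2
    rw [hspanB, hQq] at h3
    rw [h2, h3, hpowcnt Q P₂ hP₂ hP₂0, hpowcnt Q P₁ hP₁ hP₁0] at h1
    exact h1
  have hstep1 : cA = cB + ℓ := by
    have heq1 := hmain P₁ hP₁ hP₁0 hq₁def.symm
    rw [he₁', one_mul, one_mul, if_neg hne, if_pos rfl] at heq1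
    omega
  -- the set of primes above q₁ is {P₁}
  have hFFeq : (factors (q₁.map f)).toFinset = {P₁} := by
    rw [Finset.eq_singleton_iff_unique_mem]
    constructor
    · rw [Multiset.mem_toFinset, factors_eq_normalizedFactors, ← Multiset.count_ne_zero,
        ← Ideal.IsDedekindDomain.ramificationIdx'_eq_normalizedFactors_count hmapq₁ hP₁ hP₁0,
        he₁']
      exact one_ne_zero
    · intro Q hQmem
      rw [Multiset.mem_toFinset, factors_eq_normalizedFactors] at hQmem
      have hQpr : Prime Q := prime_of_normalized_factor _ hQmem
      haveI hQp : Q.IsPrime := Ideal.isPrime_of_prime hQpr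
      have hQ0 : Q ≠ ⊥ := hQpr.ne_zero
      have hle : q₁.map f ≤ Q := Ideal.le_of_dvd (dvd_of_mem_normalizedFactors hQmem)
      have hcom : Q.comap f = q₁ := by
        refine (hq₁m.eq_of_le (Ideal.comap_ne_top f hQp.ne_top) ?_).symm
        exact Ideal.map_le_iff_le_comap.mp hle
      have heQ0 : Ideal.ramificationIdx' q₁ Q ≠ 0 := by
        rw [Ideal.IsDedekindDomain.ramificationIdx'_eq_normalizedFactors_count hmapq₁ hQp hQ0,
          Multiset.count_ne_zero]
        exact hQmem
      by_contra hQP₁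
      have heq := hmain Q hQp hQ0 hcom
      rw [hstep1, Nat.mul_add, if_neg hQP₁] at heq
      have hv : Ideal.ramificationIdx' q₁ Q * ℓ ≠ 0 := Nat.mul_ne_zero heQ0 (by omega)
      set u := Ideal.ramificationIdx' q₁ Q * cB with hu
      set v := Ideal.ramificationIdx' q₁ Q * ℓ with hvdef
      split_ifs at heq <;> omega
  -- the fundamental identity
  have hsum := Ideal.sum_ramification_inertia (R := R) (S := 𝓞 K) (p := q₁) ↥L K hq₁0
  rw [IsDedekindDomain.primesOverFinset, hFFeq, Finset.sum_singleton, he₁', hf₁', mul_one] at hsum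
  haveI : FiniteDimensional ↥L K := FiniteDimensional.right k ↥L K
  refine IntermediateField.eq_of_le_of_finrank_eq' le_top ?_
  rw [IntermediateField.finrank_top]
  exact hsum.symm
end

section
/- Let F be a number field. For every X ≥ 1 and ε > 0, the number of α ∈ O_F with H_F(α) ≤ X is ≪_{F,ε} X^{1+ε}. -/
open NumberField IsDedekindDomain Multiplicative
open scoped NNReal

section auxiliary

open Submodule NumberField.InfinitePlace NumberField.mixedEmbedding
open NumberField.mixedEmbedding.fundamentalCone
open NumberField.Units NumberField.Units.dirichletUnitTheorem Module
open scoped Classical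


lemma aux_lattice_count {E : Type*} [NormedAddCommGroup E] [NormedSpace ℝ E]
    {ι : Type*} [Fintype ι] (b : Basis ι ℝ E) :
    ∃ M : ℝ, 1 ≤ M ∧ ∀ R : ℝ, 0 ≤ R →
      {x : E | x ∈ Submodule.span ℤ (Set.range b) ∧ ‖x‖ ≤ R}.Finite ∧
      (Nat.card {x : E | x ∈ Submodule.span ℤ (Set.range b) ∧ ‖x‖ ≤ R} : ℝ)
        ≤ (2 * M * (R + 1)) ^ (Fintype.card ι) := by
  classical
  haveI : FiniteDimensional ℝ E := Module.Finite.of_basis b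
  set M : ℝ := 1 + ∑ i, ‖LinearMap.toContinuousLinearMap (b.coord i)‖ with hM
  have hMsum : ∀ i, ‖LinearMap.toContinuousLinearMap (b.coord i)‖ ≤ M - 1 := by
    intro i
    simp only [hM, add_sub_cancel_left]
    exact Finset.single_le_sum (f := fun i => ‖LinearMap.toContinuousLinearMap (b.coord i)‖)
      (fun _ _ => norm_nonneg _) (Finset.mem_univ i)
  have hM1 : 1 ≤ M := by
    have : 0 ≤ ∑ i, ‖LinearMap.toContinuousLinearMap (b.coord i)‖ :=
      Finset.sum_nonneg fun _ _ => norm_nonneg _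
    linarith
  have hrepr : ∀ (x : E) (i : ι), |b.repr x i| ≤ M * ‖x‖ := by
    intro x i
    have h1 : |b.repr x i| = ‖LinearMap.toContinuousLinearMap (b.coord i) x‖ := by
      simp [Basis.coord_apply, Real.norm_eq_abs]
    rw [h1]
    refine (ContinuousLinearMap.le_opNorm _ _).trans ?_
    have : 0 ≤ ‖x‖ := norm_nonneg _
    nlinarith [hMsum i, norm_nonneg (LinearMap.toContinuousLinearMap (b.coord i))]
  refine ⟨M, hM1, fun R hR => ?_⟩
  set z : ℤ := ⌊M * R⌋ with hz
  have hz0 : 0 ≤ z := Int.floor_nonneg.mpr (mul_nonneg (by linarith) hR)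
  set S := {x : E | x ∈ Submodule.span ℤ (Set.range b) ∧ ‖x‖ ≤ R} with hS
  -- integer coordinates
  have hcoord : ∀ x ∈ S, ∀ i, ∃ k : ℤ, (k : ℝ) = b.repr x i := by
    intro x hx i
    obtain ⟨k, hk⟩ := (b.mem_span_iff_repr_mem ℤ x).mp hx.1 i
    exact ⟨k, hk⟩
  set f : S → (ι → Finset.Icc (-z) z) := fun x i =>
    ⟨(hcoord x.1 x.2 i).choose, by
      have hk := (hcoord x.1 x.2 i).choose_spec
      have habs : |((hcoord x.1 x.2 i).choose : ℝ)| ≤ M * R := by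
        rw [hk]
        exact (hrepr x.1 i).trans (mul_le_mul_of_nonneg_left x.2.2 (by linarith))
      rw [abs_le] at habs
      refine Finset.mem_Icc.mpr ⟨?_, ?_⟩
      · have h4 : ((-(hcoord x.1 x.2 i).choose : ℤ) : ℝ) ≤ M * R := by
          push_cast; linarith [habs.1]
        have h5 := Int.le_floor.mpr h4
        omega
      · exact Int.le_floor.mpr (by exact_mod_cast habs.2)⟩ with hf
  have hinj : Function.Injective f := by
    intro x y hxy
    have : ∀ i, b.repr x.1 i = b.repr y.1 i := by
      intro i
      have h1 := (hcoord x.1 x.2 i).choose_spec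
      have h2 := (hcoord y.1 y.2 i).choose_spec
      have h3 : (hcoord x.1 x.2 i).choose = (hcoord y.1 y.2 i).choose := by
        have := congrFun hxy i
        exact Subtype.ext_iff.mp this
      rw [← h1, ← h2, h3]
    exact Subtype.ext (b.ext_elem_iff.mpr this)
  haveI : Finite S := Finite.of_injective f hinj
  refine ⟨S.toFinite, ?_⟩
  have hcard : Nat.card S ≤ Nat.card (ι → Finset.Icc (-z) z) :=
    Nat.card_le_card_of_injective f hinj
  have h0 : ((z + 1 - -z).toNat : ℝ) = ((z + 1 - -z : ℤ) : ℝ) := by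
    have h00 := Int.toNat_of_nonneg (show (0:ℤ) ≤ z + 1 - -z by omega)
    exact_mod_cast congrArg (Int.cast : ℤ → ℝ) h00
  have hcount : ((z + 1 - -z).toNat : ℝ) ≤ 2 * M * (R + 1) := by
    rw [h0]
    have hzr : ((z : ℤ) : ℝ) ≤ M * R := Int.floor_le _
    push_cast
    push_cast at hzr
    nlinarith
  have hcard2 : (Nat.card (ι → Finset.Icc (-z) z) : ℝ) ≤ (2 * M * (R + 1)) ^ (Fintype.card ι) := by
    rw [Nat.card_fun, Nat.card_eq_finsetCard, Int.card_Icc, Nat.card_eq_fintype_card]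
    push_cast
    refine pow_le_pow_left₀ (Nat.cast_nonneg _) ?_ _
    exact_mod_cast hcount
  calc (Nat.card S : ℝ) ≤ (Nat.card (ι → Finset.Icc (-z) z) : ℝ) := by exact_mod_cast hcard
    _ ≤ _ := hcard2


lemma aux_log_bound (A B ε : ℝ) (hA : 0 ≤ A) (hB : 0 ≤ B) (hε : 0 < ε) (r : ℕ) :
    ∃ C : ℝ, 0 < C ∧ ∀ X : ℝ, 1 ≤ X → (A + B * Real.log X) ^ r ≤ C * X ^ ε := by
  set δ : ℝ := ε / (r + 1) with hδ
  have hδ0 : 0 < δ := by positivity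
  refine ⟨(A + B / δ) ^ r + 1, by positivity, fun X hX => ?_⟩
  have hX0 : (0 : ℝ) < X := by linarith
  have hlog : 0 ≤ Real.log X := Real.log_nonneg hX
  have h1 : Real.log X ≤ X ^ δ / δ := Real.log_le_rpow_div hX0.le hδ0
  have hXδ1 : 1 ≤ X ^ δ := Real.one_le_rpow hX hδ0.le
  have h2 : A + B * Real.log X ≤ (A + B / δ) * X ^ δ := by
    have : B * Real.log X ≤ B / δ * X ^ δ := by
      calc B * Real.log X ≤ B * (X ^ δ / δ) := by
            exact mul_le_mul_of_nonneg_left h1 hB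
        _ = B / δ * X ^ δ := by ring
    nlinarith
  have h3 : (A + B * Real.log X) ^ r ≤ ((A + B / δ) * X ^ δ) ^ r := by
    refine pow_le_pow_left₀ (by positivity) h2 _
  refine h3.trans ?_
  rw [mul_pow]
  have h4 : (X ^ δ) ^ r = X ^ (δ * r) := by
    rw [← Real.rpow_natCast (X ^ δ) r, ← Real.rpow_mul hX0.le]
  have h5 : X ^ (δ * r) ≤ X ^ ε := by
    refine Real.rpow_le_rpow_of_exponent_le hX ?_
    rw [hδ]
    rw [div_mul_eq_mul_div]
    rw [div_le_iff₀ (by positivity)]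
    nlinarith
  calc (A + B / δ) ^ r * (X ^ δ) ^ r ≤ ((A + B / δ) ^ r) * X ^ ε := by
        rw [h4]
        exact mul_le_mul_of_nonneg_left h5 (by positivity)
    _ ≤ ((A + B / δ) ^ r + 1) * X ^ ε := by
        have : (0:ℝ) ≤ X ^ ε := by positivity
        nlinarith
  
lemma finHeight_integer_eq_one (F : Type*) [Field F] [NumberField F] (α : 𝓞 F) :
    finHeight F (algebraMap (𝓞 F) F α) = 1 := by
  rw [finHeight]
  refine finprod_eq_one_of_forall_eq_one fun v => ?_
  have h1 : v.valuation F (algebraMap (𝓞 F) F α) ≤ 1 := v.valuation_le_one (K := F) α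
  have he1 : (1 : ℝ≥0) < (Ideal.absNorm v.asIdeal : ℝ≥0) := by
    rw [← Nat.cast_one, Nat.cast_lt]
    have h2 : Ideal.absNorm v.asIdeal ≠ 0 := by
      simp only [ne_eq, Ideal.absNorm_eq_zero_iff]
      exact v.ne_bot
    have h3 : Ideal.absNorm v.asIdeal ≠ 1 := by
      intro h
      have := Ideal.absNorm_eq_one_iff.mp h
      exact v.isPrime.ne_top this
    omega
  have hmono := (WithZeroMulInt.toNNReal_strictMono he1).monotone h1
  rw [map_one] at hmono
  rw [max_eq_left]
  exact_mod_cast hmono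


lemma aux_cone_bound (F : Type*) [Field F] [NumberField F] :
    ∃ D : ℝ, 0 ≤ D ∧ ∀ a ∈ fundamentalCone F, ∀ w : InfinitePlace F,
      |Real.log (normAtPlace w a) -
        Real.log (mixedEmbedding.norm a) * (finrank ℚ F : ℝ)⁻¹| ≤ D := by
  classical
  set B := (basisUnitLattice F).ofZLatticeBasis ℝ (unitLattice F) with hB
  obtain ⟨C, hC⟩ := isBounded_iff_forall_norm_le.mp (ZSpan.fundamentalDomain_isBounded B)
  set D₀ : ℝ := max C 0 with hD₀def
  have hD₀0 : 0 ≤ D₀ := le_max_right _ _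
  have hD₀ : ∀ y ∈ ZSpan.fundamentalDomain B, ‖y‖ ≤ D₀ :=
    fun y hy => (hC y hy).trans (le_max_left _ _)
  set n : ℕ := finrank ℚ F with hn
  have hn1 : 1 ≤ n := finrank_pos
  refine ⟨n * D₀, by positivity, fun a ha w => ?_⟩
  have hmem : logMap a ∈ ZSpan.fundamentalDomain B := ha.1
  set q : ℝ := Real.log (mixedEmbedding.norm a) * (n : ℝ)⁻¹ with hq
  have hnap : ∀ w : InfinitePlace F, 0 < normAtPlace w a := normAtPlace_pos_of_mem ha
  have hne : ∀ w : {w : InfinitePlace F // w ≠ w₀}, |Real.log (normAtPlace w.1 a) - q| ≤ D₀ := by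
    intro w
    have h1 : |logMap a w| ≤ D₀ := by
      have h0 := norm_le_pi_norm (logMap a) w
      rw [Real.norm_eq_abs] at h0
      exact h0.trans (hD₀ _ hmem)
    rw [logMap_apply, abs_mul, Nat.abs_cast] at h1
    have h2 : (1 : ℝ) ≤ mult w.1 := one_le_mult
    nlinarith [abs_nonneg (Real.log (normAtPlace w.1 a) -
      Real.log (mixedEmbedding.norm a) * (finrank ℚ F : ℝ)⁻¹)]
  -- sum identity
  have hlogsum : Real.log (mixedEmbedding.norm a) =
      ∑ w : InfinitePlace F, (mult w : ℝ) * Real.log (normAtPlace w a) := by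
    rw [mixedEmbedding.norm_apply, Real.log_prod
      (fun w _ => pow_ne_zero _ (hnap w).ne')]
    simp_rw [Real.log_pow]
  have hsummult : ∑ w : InfinitePlace F, (mult w : ℝ) = (n : ℝ) := by
    rw [hn]
    exact_mod_cast congrArg (Nat.cast : ℕ → ℝ) (sum_mult_eq (K := F))
  have hsumzero : ∑ w : InfinitePlace F,
      (mult w : ℝ) * (Real.log (normAtPlace w a) - q) = 0 := by
    simp_rw [mul_sub]
    rw [Finset.sum_sub_distrib, ← hlogsum, ← Finset.sum_mul, hsummult, hq]
    have : (n : ℝ) ≠ 0 := by positivity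
    field_simp
    ring
  by_cases hw : w = w₀
  · -- w = w₀ case
    have herase : (mult w : ℝ) * (Real.log (normAtPlace w a) - q) =
        - ∑ w' ∈ Finset.univ.erase w, (mult w' : ℝ) * (Real.log (normAtPlace w' a) - q) := by
      have := Finset.add_sum_erase Finset.univ
        (fun w' => (mult w' : ℝ) * (Real.log (normAtPlace w' a) - q)) (Finset.mem_univ w)
      rw [hsumzero] at this
      have this' : (mult w : ℝ) * (Real.log (normAtPlace w a) - q) +
          ∑ w' ∈ Finset.univ.erase w, (mult w' : ℝ) * (Real.log (normAtPlace w' a) - q) = 0 :=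
        this
      linarith
    have hbound : |∑ w' ∈ Finset.univ.erase w,
        (mult w' : ℝ) * (Real.log (normAtPlace w' a) - q)| ≤ (n : ℝ) * D₀ := by
      refine (Finset.abs_sum_le_sum_abs _ _).trans ?_
      have h1 : ∀ w' ∈ Finset.univ.erase w,
          |(mult w' : ℝ) * (Real.log (normAtPlace w' a) - q)| ≤ (mult w' : ℝ) * D₀ := by
        intro w' hw'
        rw [abs_mul, Nat.abs_cast]
        exact mul_le_mul_of_nonneg_left (hne ⟨w', hw ▸ Finset.ne_of_mem_erase hw'⟩)
          (Nat.cast_nonneg _)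
      refine (Finset.sum_le_sum h1).trans ?_
      rw [← Finset.sum_mul]
      refine mul_le_mul_of_nonneg_right ?_ hD₀0
      calc ∑ w' ∈ Finset.univ.erase w, (mult w' : ℝ)
          ≤ ∑ w' : InfinitePlace F, (mult w' : ℝ) :=
            Finset.sum_le_sum_of_subset_of_nonneg (Finset.erase_subset _ _)
              (fun _ _ _ => Nat.cast_nonneg _)
        _ = (n : ℝ) := hsummult
    have h2 : (1 : ℝ) ≤ mult w := one_le_mult
    have h3 : |(mult w : ℝ) * (Real.log (normAtPlace w a) - q)| ≤ (n : ℝ) * D₀ := by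
      rw [herase, abs_neg]; exact hbound
    rw [abs_mul, Nat.abs_cast] at h3
    nlinarith [abs_nonneg (Real.log (normAtPlace w a) - q)]
  · refine (hne ⟨w, hw⟩).trans ?_
    have : (1 : ℝ) ≤ n := by exact_mod_cast hn1
    nlinarith



lemma aux_unit_count (F : Type*) [Field F] [NumberField F] :
    ∃ M : ℝ, 1 ≤ M ∧ ∀ R : ℝ, 0 ≤ R →
      {u : (𝓞 F)ˣ | ‖logEmbedding F (Additive.ofMul u)‖ ≤ R}.Finite ∧
      (Nat.card {u : (𝓞 F)ˣ | ‖logEmbedding F (Additive.ofMul u)‖ ≤ R} : ℝ)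
        ≤ M * (M * (R + 1)) ^ (rank F) := by
  classical
  obtain ⟨M₁, hM₁, hcount⟩ :=
    aux_lattice_count ((basisUnitLattice F).ofZLatticeBasis ℝ (unitLattice F))
  set B := (basisUnitLattice F).ofZLatticeBasis ℝ (unitLattice F) with hBdef
  set t : ℕ := Nat.card (Units.torsion F) with ht
  have ht1 : 1 ≤ t := Nat.card_pos
  set M : ℝ := 2 * M₁ + t with hM
  have hM1 : 1 ≤ M := by
    have : (1 : ℝ) ≤ t := by exact_mod_cast ht1
    linarith
  refine ⟨M, hM1, fun R hR => ?_⟩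
  obtain ⟨hLfin, hLcard⟩ := hcount R hR
  set L := {x : ({w : InfinitePlace F // w ≠ w₀} → ℝ) |
    x ∈ Submodule.span ℤ (Set.range B) ∧ ‖x‖ ≤ R} with hLdef
  set U := {u : (𝓞 F)ˣ | ‖logEmbedding F (Additive.ofMul u)‖ ≤ R} with hUdef
  set s : ({w : InfinitePlace F // w ≠ w₀} → ℝ) → (𝓞 F)ˣ := fun x =>
    if h : ∃ v : (𝓞 F)ˣ, logEmbedding F (Additive.ofMul v) = x then h.choose else 1 with hs
  have hmemspan : ∀ u : (𝓞 F)ˣ,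
      logEmbedding F (Additive.ofMul u) ∈ Submodule.span ℤ (Set.range B) := by
    intro u
    rw [hBdef, Basis.ofZLatticeBasis_span]
    exact ⟨Additive.ofMul u, trivial, rfl⟩
  have hsspec : ∀ u : (𝓞 F)ˣ,
      logEmbedding F (Additive.ofMul (s (logEmbedding F (Additive.ofMul u)))) =
        logEmbedding F (Additive.ofMul u) := by
    intro u
    have hex : ∃ v : (𝓞 F)ˣ, logEmbedding F (Additive.ofMul v) =
        logEmbedding F (Additive.ofMul u) := ⟨u, rfl⟩
    rw [hs]
    simp only [dif_pos hex]
    exact hex.choose_spec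
  have htors : ∀ u : (𝓞 F)ˣ, u * (s (logEmbedding F (Additive.ofMul u)))⁻¹ ∈ Units.torsion F := by
    intro u
    rw [← logEmbedding_eq_zero_iff]
    have : Additive.ofMul (u * (s (logEmbedding F (Additive.ofMul u)))⁻¹) =
        Additive.ofMul u + -(Additive.ofMul (s (logEmbedding F (Additive.ofMul u)))) := rfl
    rw [this, map_add, map_neg, hsspec u, add_neg_cancel]
  set Φ : U → L × Units.torsion F := fun u =>
    (⟨logEmbedding F (Additive.ofMul u.1), hmemspan u.1, u.2⟩,
     ⟨u.1 * (s (logEmbedding F (Additive.ofMul u.1)))⁻¹, htors u.1⟩) with hΦ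
  have hinj : Function.Injective Φ := by
    intro u u' huu
    have h1 : logEmbedding F (Additive.ofMul u.1) = logEmbedding F (Additive.ofMul u'.1) :=
      Subtype.ext_iff.mp (congrArg Prod.fst huu)
    have h2 := Subtype.ext_iff.mp (congrArg Prod.snd huu)
    simp only [hΦ] at h2
    rw [h1] at h2
    exact Subtype.ext (mul_right_cancel h2)
  haveI : Finite L := hLfin.to_subtype
  haveI : Finite (U : Set _) := Finite.of_injective Φ hinj
  refine ⟨Set.toFinite U, ?_⟩
  have hcard : Nat.card U ≤ Nat.card (L × Units.torsion F) := Nat.card_le_card_of_injective Φ hinj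
  rw [Nat.card_prod] at hcard
  have hup : (Nat.card U : ℝ) ≤ (Nat.card L : ℝ) * t := by exact_mod_cast hcard
  refine hup.trans ?_
  have hrank : (2 * M₁ * (R + 1)) ^ (Fintype.card (Fin (rank F))) =
      (2 * M₁ * (R + 1)) ^ (rank F) := by rw [Fintype.card_fin]
  have h3 : (Nat.card L : ℝ) ≤ (2 * M₁ * (R + 1)) ^ (rank F) := by
    rw [← hrank]; exact hLcard
  have h4 : (2 * M₁ * (R + 1)) ^ (rank F) ≤ (M * (R + 1)) ^ (rank F) := by
    refine pow_le_pow_left₀ (by positivity) ?_ _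
    have : (0:ℝ) ≤ t := Nat.cast_nonneg _
    nlinarith
  have h5 : (t : ℝ) ≤ M := by
    have : (0:ℝ) ≤ M₁ := by linarith
    rw [hM]; linarith
  calc (Nat.card L : ℝ) * t ≤ (M * (R + 1)) ^ (rank F) * M := by
        refine mul_le_mul (h3.trans h4) h5 (Nat.cast_nonneg _) (by positivity)
    _ = M * (M * (R + 1)) ^ (rank F) := by ring


end auxiliary

section mainproof

open Submodule NumberField.InfinitePlace NumberField.mixedEmbedding
open NumberField.mixedEmbedding.fundamentalCone
open NumberField.Units NumberField.Units.dirichletUnitTheorem Module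
open scoped Classical

set_option maxHeartbeats 2000000 in
/-- For a number field `F` and every `ε > 0`, the number of algebraic integers `α ∈ O_F`
with `H_F(α) ≤ X` is `≪_{F,ε} X^{1+ε}`. -/
theorem count_integers_of_bounded_height (F : Type*) [Field F] [NumberField F]
    (ε : ℝ) (hε : 0 < ε) :
    ∃ C : ℝ, 0 < C ∧ ∀ X : ℝ, 1 ≤ X →
      (Set.ncard {α : 𝓞 F | mulHeight F (algebraMap (𝓞 F) F α) ≤ X} : ℝ) ≤
        C * X ^ (1 + ε) := by
  classical
  set n : ℕ := finrank ℚ F with hn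
  have hn1 : 1 ≤ n := finrank_pos
  have hn0 : (0:ℝ) < n := by exact_mod_cast hn1
  obtain ⟨D, hD0, hD⟩ := aux_cone_bound F
  obtain ⟨M₁, hM₁1, hM₁⟩ := aux_lattice_count (latticeBasis F)
  obtain ⟨M₂, hM₂1, hM₂⟩ := aux_unit_count F
  obtain ⟨Cε, hCε0, hCε⟩ := aux_log_bound (M₂ * (2 * D + 1)) (4 * M₂) ε
    (by positivity) (by positivity) hε (rank F)
  set C₁ : ℝ := (2 * M₁ * (Real.exp D + 1)) ^ n with hC₁
  have hC₁0 : 0 < C₁ := by positivity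
  refine ⟨M₂ * Cε * C₁ + 1, by positivity, fun X hX => ?_⟩
  have hX0 : (0:ℝ) < X := by linarith
  have hlogX : 0 ≤ Real.log X := Real.log_nonneg hX
  set R : ℝ := 2 * (D + 2 * Real.log X) with hR
  have hR0 : 0 ≤ R := by rw [hR]; linarith
  set RA : ℝ := Real.exp D * X ^ ((n:ℝ)⁻¹) with hRA
  have hXn1 : 1 ≤ X ^ ((n:ℝ)⁻¹) := Real.one_le_rpow hX (by positivity)
  have hRA0 : 0 ≤ RA := by positivity
  obtain ⟨hUfin, hUcard⟩ := hM₂ R hR0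
  obtain ⟨hLfin, hLcard⟩ := hM₁ RA hRA0
  set U := {u : (𝓞 F)ˣ | ‖logEmbedding F (Additive.ofMul u)‖ ≤ R} with hU
  set L := {x : mixedSpace F | x ∈ Submodule.span ℤ (Set.range (latticeBasis F)) ∧ ‖x‖ ≤ RA}
    with hL
  set g : 𝓞 F → (𝓞 F)ˣ := fun a0 =>
    if h : ∃ u : (𝓞 F)ˣ, u • mixedEmbedding F (algebraMap (𝓞 F) F a0) ∈ integerSet F then
      h.choose else 1 with hg
  -- the key analytic estimates
  have key : ∀ a0 : 𝓞 F, a0 ≠ 0 → mulHeight F (algebraMap (𝓞 F) F a0) ≤ X →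
      g a0 ∈ U ∧ g a0 • mixedEmbedding F (algebraMap (𝓞 F) F a0) ∈ L := by
    intro a0 ha0 hht
    set β : F := algebraMap (𝓞 F) F a0 with hβ
    have hβ0 : β ≠ 0 := fun h => ha0 (IsFractionRing.injective (𝓞 F) F (by rw [map_zero]; exact h))
    have hwpos : ∀ w : InfinitePlace F, 0 < w β := fun w => pos_iff.mpr hβ0
    -- product of max ≤ X
    have hprod : ∏ w : InfinitePlace F, max 1 ((w β) ^ w.mult) ≤ X := by
      rw [mulHeight, finHeight_integer_eq_one, mul_one] at hht
      exact hht
    have heraseprod : ∀ w : InfinitePlace F,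
        max 1 ((w β) ^ w.mult) *
          ∏ w' ∈ Finset.univ.erase w, max 1 ((w' β) ^ w'.mult) =
          ∏ w' : InfinitePlace F, max 1 ((w' β) ^ w'.mult) := fun w =>
      Finset.mul_prod_erase Finset.univ (fun w' => max 1 ((w' β) ^ w'.mult)) (Finset.mem_univ w)
    have herase1 : ∀ w : InfinitePlace F,
        (1:ℝ) ≤ ∏ w' ∈ Finset.univ.erase w, max 1 ((w' β) ^ w'.mult) := by
      intro w
      have := Finset.prod_le_prod (s := Finset.univ.erase w) (f := fun _ => (1:ℝ))
        (g := fun w' => max 1 ((w' β) ^ w'.mult)) (fun _ _ => zero_le_one)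
        (fun w' _ => le_max_left _ _)
      simpa using this
    have hfac : ∀ w : InfinitePlace F, (w β) ^ w.mult ≤ X := by
      intro w
      refine le_trans (le_max_right 1 _) (le_trans ?_ hprod)
      rw [← heraseprod w]
      have h1 : (1:ℝ) ≤ max 1 ((w β) ^ w.mult) := le_max_left _ _
      nlinarith [herase1 w]
    -- the norm product
    have hNpos : (1:ℝ) ≤ ∏ w : InfinitePlace F, (w β) ^ w.mult := by
      rw [prod_eq_abs_norm]
      have h1 : Algebra.norm ℚ β = ((Algebra.norm ℤ a0 : ℤ) : ℚ) := by
        rw [hβ, ← Algebra.coe_norm_int]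
      have h2 : Algebra.norm ℤ a0 ≠ 0 := by
        intro h
        exact ha0 (by simpa using (Algebra.norm_eq_zero_iff (R := ℤ) (S := 𝓞 F)).mp h)
      have h3 : (1:ℚ) ≤ |Algebra.norm ℚ β| := by
        rw [h1]
        rw [← Int.cast_abs]
        exact_mod_cast Int.one_le_abs h2
      exact_mod_cast h3
    have hprodX : ∏ w : InfinitePlace F, (w β) ^ w.mult ≤ X := by
      refine le_trans (Finset.prod_le_prod (fun w _ => by positivity)
        (fun w _ => le_max_right 1 _)) hprod
    -- lower bound for each factor
    have hlow : ∀ w : InfinitePlace F, X⁻¹ ≤ (w β) ^ w.mult := by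
      intro w
      have hrest : ∏ w' ∈ Finset.univ.erase w, (w' β) ^ w'.mult ≤ X := by
        refine le_trans (Finset.prod_le_prod (fun w' _ => by positivity)
          (fun w' _ => le_max_right 1 _)) ?_
        refine le_trans ?_ hprod
        rw [← heraseprod w]
        have h1 : (1:ℝ) ≤ max 1 ((w β) ^ w.mult) := le_max_left _ _
        have h2 : (0:ℝ) ≤ ∏ w' ∈ Finset.univ.erase w, max 1 ((w' β) ^ w'.mult) := by
          positivity
        nlinarith
      have hmul : (w β) ^ w.mult * ∏ w' ∈ Finset.univ.erase w, (w' β) ^ w'.mult =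
          ∏ w' : InfinitePlace F, (w' β) ^ w'.mult :=
        Finset.mul_prod_erase Finset.univ (fun w' => (w' β) ^ w'.mult) (Finset.mem_univ w)
      rw [inv_eq_one_div, div_le_iff₀ hX0]
      have hwp : (0:ℝ) ≤ (w β) ^ w.mult := by positivity
      nlinarith [hNpos, hmul, hrest]
    -- log bounds for each place
    have hlogw : ∀ w : InfinitePlace F, |Real.log (w β)| ≤ Real.log X := by
      intro w
      have h1 : Real.log ((w β) ^ w.mult) ≤ Real.log X :=
        Real.log_le_log (pow_pos (hwpos w) _) (hfac w)
      have h2 : -Real.log X ≤ Real.log ((w β) ^ w.mult) := by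
        have := Real.log_le_log (by positivity) (hlow w)
        rwa [Real.log_inv] at this
      rw [Real.log_pow] at h1 h2
      have hm1 : (1:ℝ) ≤ (w.mult : ℝ) := one_le_mult
      rw [abs_le]
      rcases le_or_gt 0 (Real.log (w β)) with h | h
      · constructor <;> nlinarith
      · constructor <;> nlinarith
    -- the chosen unit
    have hex : ∃ u : (𝓞 F)ˣ, u • mixedEmbedding F β ∈ integerSet F := by
      refine exists_unitSMul_mem_integerSet ?_ ⟨β, ⟨a0, rfl⟩, rfl⟩
      intro h
      exact hβ0 (mixedEmbedding_injective F (by rw [h, map_zero]))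
    have hga : g a0 • mixedEmbedding F β ∈ integerSet F := by
      rw [hg]
      simp only [← hβ, dif_pos hex]
      exact hex.choose_spec
    set u : (𝓞 F)ˣ := g a0 with hu
    set a : mixedSpace F := u • mixedEmbedding F β with ha
    have hacone : a ∈ fundamentalCone F := (mem_integerSet.mp hga).1
    obtain ⟨x, hxa⟩ := (mem_integerSet.mp hga).2
    -- norm of a
    have hnorma : mixedEmbedding.norm a = ∏ w : InfinitePlace F, (w β) ^ w.mult := by
      rw [ha, norm_unit_smul, norm_eq_norm, ← prod_eq_abs_norm]
    have hnorma1 : 1 ≤ mixedEmbedding.norm a := by rw [hnorma]; exact hNpos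
    have hnormaX : mixedEmbedding.norm a ≤ X := by rw [hnorma]; exact hprodX
    set q : ℝ := Real.log (mixedEmbedding.norm a) * (n:ℝ)⁻¹ with hq
    have hq0 : 0 ≤ q := by
      have := Real.log_nonneg hnorma1
      positivity
    have hqX : q ≤ Real.log X := by
      have h1 : Real.log (mixedEmbedding.norm a) ≤ Real.log X :=
        Real.log_le_log (by linarith) hnormaX
      have h2 : (n:ℝ)⁻¹ ≤ 1 := by
        rw [inv_le_one_iff₀]; right; exact_mod_cast hn1
      have h3 : 0 ≤ Real.log (mixedEmbedding.norm a) := Real.log_nonneg hnorma1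
      nlinarith
    have hDw : ∀ w : InfinitePlace F, |Real.log (normAtPlace w a) - q| ≤ D := by
      intro w
      exact hD a hacone w
    have hnappos : ∀ w : InfinitePlace F, 0 < normAtPlace w a := normAtPlace_pos_of_mem hacone
    -- normAtPlace bound
    have hnaple : ∀ w : InfinitePlace F, normAtPlace w a ≤ RA := by
      intro w
      have h1 : Real.log (normAtPlace w a) ≤ D + q := by
        have := (abs_le.mp (hDw w)).2; linarith
      have h2 : normAtPlace w a = Real.exp (Real.log (normAtPlace w a)) :=
        (Real.exp_log (hnappos w)).symm
      rw [h2, hRA]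
      have h3 : Real.exp (Real.log (normAtPlace w a)) ≤ Real.exp (D + q) :=
        Real.exp_le_exp.mpr h1
      refine h3.trans ?_
      rw [Real.exp_add]
      refine mul_le_mul_of_nonneg_left ?_ (Real.exp_nonneg D)
      have h4 : q ≤ Real.log X * (n:ℝ)⁻¹ := by
        rw [hq]
        refine mul_le_mul_of_nonneg_right ?_ (by positivity)
        exact Real.log_le_log (by linarith) hnormaX
      calc Real.exp q ≤ Real.exp (Real.log X * (n:ℝ)⁻¹) := Real.exp_le_exp.mpr h4
        _ = X ^ ((n:ℝ)⁻¹) := by rw [Real.rpow_def_of_pos hX0]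
    -- membership in L
    have hmemL : a ∈ L := by
      constructor
      · rw [mem_span_latticeBasis]
        exact ⟨x, by simpa using hxa⟩
      · -- norm bound
        rw [Prod.norm_def]
        refine max_le ?_ ?_
        · refine pi_norm_le_iff_of_nonneg hRA0 |>.mpr fun i => ?_
          have := hnaple i.1
          rwa [normAtPlace_apply_of_isReal i.prop a] at this
        · refine pi_norm_le_iff_of_nonneg hRA0 |>.mpr fun i => ?_
          have := hnaple i.1
          rwa [normAtPlace_apply_of_isComplex i.prop a] at this
    -- membership in U
    have hmemU : u ∈ U := by
      have hwu : ∀ w : InfinitePlace F, |Real.log (w (u : F))| ≤ D + 2 * Real.log X := by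
        intro w
        have hmul : normAtPlace w a = w ((u : 𝓞 F) : F) * w β := by
          rw [ha, unitSMul_smul, map_mul, normAtPlace_apply, normAtPlace_apply]
        have hu0 : w ((u : 𝓞 F) : F) ≠ 0 := by
          simp only [ne_eq, map_eq_zero]
          exact coe_ne_zero u
        have hlogmul : Real.log (normAtPlace w a) = Real.log (w ((u : 𝓞 F) : F)) +
            Real.log (w β) := by
          rw [hmul, Real.log_mul hu0 (hwpos w).ne']
        have h1 : |Real.log (normAtPlace w a) - q| ≤ D := hDw w
        have h2 := hlogw w
        have h3 : |q| ≤ Real.log X := abs_le.mpr ⟨by linarith, hqX⟩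
        rw [abs_le] at h1 h2 h3 ⊢
        constructor <;> nlinarith
      rw [hU, Set.mem_setOf_eq]
      refine pi_norm_le_iff_of_nonneg hR0 |>.mpr fun w => ?_
      rw [logEmbedding_component, Real.norm_eq_abs, abs_mul, Nat.abs_cast]
      have hm2 : (mult w.1 : ℝ) ≤ 2 := by
        rw [InfinitePlace.mult]
        split_ifs <;> norm_num
      have := hwu w.1
      have habs0 : 0 ≤ |Real.log (w.1 (u : F))| := abs_nonneg _
      rw [hR]
      nlinarith
    exact ⟨hmemU, hmemL⟩
  -- the injection
  set S := {α : 𝓞 F | mulHeight F (algebraMap (𝓞 F) F α) ≤ X} with hS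
  set Φ : S → Option (U × L) := fun α =>
    if hα : α.1 = 0 then none else
      some (⟨g α.1, (key α.1 hα α.2).1⟩,
            ⟨g α.1 • mixedEmbedding F (algebraMap (𝓞 F) F α.1), (key α.1 hα α.2).2⟩) with hΦ
  have hinj : Function.Injective Φ := by
    intro α α' hαα
    by_cases hα : α.1 = 0 <;> by_cases hα' : α'.1 = 0
    · exact Subtype.ext (hα.trans hα'.symm)
    · simp only [hΦ, dif_pos hα, dif_neg hα'] at hαα
      cases hαα
    · simp only [hΦ, dif_pos hα', dif_neg hα] at hαα
      cases hαα
    · simp only [hΦ, dif_neg hα, dif_neg hα', Option.some.injEq, Prod.mk.injEq] at hαα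
      obtain ⟨h1, h2⟩ := hαα
      have h1' : g α.1 = g α'.1 := Subtype.ext_iff.mp h1
      have h2' : g α.1 • mixedEmbedding F (algebraMap (𝓞 F) F α.1) =
          g α'.1 • mixedEmbedding F (algebraMap (𝓞 F) F α'.1) := Subtype.ext_iff.mp h2
      rw [← h1'] at h2'
      have h3 := MulAction.injective (β := mixedSpace F) (g α.1) h2'
      have h4 := mixedEmbedding_injective F h3
      exact Subtype.ext (IsFractionRing.injective (𝓞 F) F h4)
  haveI : Finite U := hUfin.to_subtype
  haveI : Finite L := hLfin.to_subtype
  haveI : Finite (Option (↥U × ↥L)) :=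
    Finite.of_equiv ((↥U × ↥L) ⊕ PUnit.{1}) (Equiv.optionEquivSumPUnit _).symm
  have hcard : Nat.card S ≤ Nat.card (Option (U × L)) := Nat.card_le_card_of_injective Φ hinj
  have hoption : Nat.card (Option (U × L)) = Nat.card U * Nat.card L + 1 := by
    rw [Nat.card_congr ((Equiv.optionEquivSumPUnit (↥U × ↥L)) :
      Option (↥U × ↥L) ≃ (↥U × ↥L) ⊕ PUnit.{1}), Nat.card_sum, Nat.card_prod]
    simp
  rw [hoption] at hcard
  -- final arithmetic
  have hUR : (Nat.card U : ℝ) ≤ M₂ * (Cε * X ^ ε) := by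
    refine hUcard.trans ?_
    refine mul_le_mul_of_nonneg_left ?_ (by linarith)
    have heq : M₂ * (R + 1) = M₂ * (2 * D + 1) + 4 * M₂ * Real.log X := by rw [hR]; ring
    rw [heq]
    exact hCε X hX
  have hLR : (Nat.card L : ℝ) ≤ C₁ * X := by
    refine hLcard.trans ?_
    have hcardι : Fintype.card (Module.Free.ChooseBasisIndex ℤ (𝓞 F)) = n := by
      rw [← Module.finrank_eq_card_chooseBasisIndex, RingOfIntegers.rank]
    rw [hcardι]
    have h1 : RA + 1 ≤ (Real.exp D + 1) * X ^ ((n:ℝ)⁻¹) := by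
      rw [hRA]
      nlinarith [Real.exp_pos D]
    have h2 : (2 * M₁ * (RA + 1)) ^ n ≤ (2 * M₁ * ((Real.exp D + 1) * X ^ ((n:ℝ)⁻¹))) ^ n := by
      refine pow_le_pow_left₀ (by positivity) ?_ _
      nlinarith
    refine h2.trans ?_
    have h3 : (2 * M₁ * ((Real.exp D + 1) * X ^ ((n:ℝ)⁻¹))) ^ n =
        C₁ * (X ^ ((n:ℝ)⁻¹)) ^ n := by
      rw [hC₁, ← mul_pow]; ring_nf
    rw [h3, Real.rpow_inv_natCast_pow hX0.le (by omega)]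
  have hfin : (Nat.card S : ℝ) ≤ (M₂ * Cε * C₁ + 1) * X ^ (1 + ε) := by
    have h0 : (Nat.card S : ℝ) ≤ (Nat.card U : ℝ) * (Nat.card L : ℝ) + 1 := by
      exact_mod_cast hcard
    have h1 : (Nat.card U : ℝ) * (Nat.card L : ℝ) ≤ (M₂ * (Cε * X ^ ε)) * (C₁ * X) := by
      refine mul_le_mul hUR hLR (Nat.cast_nonneg _) (by positivity)
    have h2 : X ^ (1 + ε) = X * X ^ ε := by
      rw [Real.rpow_add hX0, Real.rpow_one]
    have h3 : 1 ≤ X ^ (1 + ε) := Real.one_le_rpow hX (by positivity)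
    calc (Nat.card S : ℝ) ≤ (M₂ * (Cε * X ^ ε)) * (C₁ * X) + 1 := by linarith
      _ = (M₂ * Cε * C₁) * (X * X ^ ε) + 1 := by ring
      _ = (M₂ * Cε * C₁) * X ^ (1 + ε) + 1 := by rw [h2]
      _ ≤ (M₂ * Cε * C₁ + 1) * X ^ (1 + ε) := by nlinarith [mul_nonneg (mul_nonneg (by linarith : (0:ℝ) ≤ M₂) hCε0.le) hC₁0.le]
  rw [← Nat.card_coe_set_eq]
  exact hfin

end mainproof
end
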